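/- arXiv:2008.03618 — 5 statements merged into one kernel-verified Lean document; each statement's English description precedes it below -/
import Mathlib

section
/- Let n ≥ 0 and let V be an (n+1)-dimensional vector space over ℚ with basis ε_0, …, ε_n. Let N : V → V be the linear map determined by N ε_0 = 0 and N ε_i = ε_{i−1} for 1 ≤ i ≤ n. Let Q be a nondegenerate bilinear form on V satisfying Q(N x, y) = −Q(x, N y) for all x, y ∈ V. Let T : V → V be a linear map preserving Q (i.e. Q(T x, T y) = Q(x, y) for all x, y), let δ ∈ V be such that the image of T − I is contained in the line ℚ·δ, and assume T ε_0 ≠ ε_0. Then δ does not lie in the span of ε_0, …, ε_{n−1}; equivalently, δ, Nδ, N²δ, …, N^n δ form a basis of V (δ generates V under N). -/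
/-!
Write `T x = x + φ x • δ`. Expanding `Q (T x₀) (T y) = Q x₀ y` shows that a vector `x₀` moved by `T`
cannot be `Q`-orthogonal to `δ` on both sides, by nondegeneracy. As `N` is skew for `Q` and kills
`ε 0`, the vector `ε 0` is orthogonal on both sides to the range of `N`, which contains
`ε 0, …, ε (n-1)`; so `δ` is not in their span. Hence the top coordinate of `δ` is nonzero, so
`N ^ n δ ≠ 0 = N ^ (n + 1) δ`, and a vector of nilpotency order exactly `n + 1` is cyclic.
-/

namespace LinearMap.IsOrthogonal

variable {R V : Type*} [CommRing R] [NoZeroDivisors R] [AddCommGroup V] [Module R V]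
  {Q : LinearMap.BilinForm R V} {T : V →ₗ[R] V}

theorem apply_eq_self_of_orthogonal_direction (hT : Q.IsOrthogonal T) (hQ : Q.SeparatingLeft)
    {δ : V} (hδ : ∀ x, T x - x ∈ R ∙ δ) {x₀ : V} (h₁ : Q x₀ δ = 0) (h₂ : Q δ x₀ = 0) :
    T x₀ = x₀ := by
  obtain ⟨a, ha⟩ := Submodule.mem_span_singleton.mp (hδ x₀)
  by_contra hne
  have ha0 : a ≠ 0 := by
    rintro rfl
    exact hne (sub_eq_zero.mp (by simpa using ha.symm))
  have hexpand : ∀ y, ∀ b : R, b • δ = T y - y → a * (Q δ y + b * Q δ δ) = 0 := by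
    intro y b hb
    have h := hT x₀ y
    rw [eq_add_of_sub_eq' ha.symm, eq_add_of_sub_eq' hb.symm] at h
    simp only [map_add, map_smul, LinearMap.add_apply, LinearMap.smul_apply, smul_eq_mul,
      h₁] at h
    linear_combination h
  have hδδ : Q δ δ = 0 := by
    have h := hexpand x₀ a ha
    rw [h₂, zero_add] at h
    simpa [ha0] using h
  have hδ0 : δ = 0 := hQ δ fun y => by
    obtain ⟨b, hb⟩ := Submodule.mem_span_singleton.mp (hδ y)
    simpa [hδδ, ha0] using hexpand y b hb
  rw [hδ0, smul_zero, eq_comm, sub_eq_zero] at ha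
  exact hne ha

end LinearMap.IsOrthogonal

theorem Module.End.linearIndependent_pow_apply {K V : Type*} [DivisionRing K] [AddCommGroup V]
    [Module K V] {f : Module.End K V} {v : V} {m : ℕ} (hm : (f ^ m) v ≠ 0)
    (hm' : (f ^ (m + 1)) v = 0) :
    LinearIndependent K fun k : Fin (m + 1) => (f ^ (k : ℕ)) v := by
  induction m generalizing v with
  | zero => exact (linearIndependent_unique_iff (ι := Fin 1)).mpr (by simpa using hm)
  | succ m ih =>
    have htail : Fin.tail (fun k : Fin (m + 2) => (f ^ (k : ℕ)) v) =
        fun k : Fin (m + 1) => (f ^ (k : ℕ)) (f v) := by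
      ext k
      simp [Fin.tail, pow_succ]
    have hker : Submodule.span K (Set.range fun k : Fin (m + 1) => (f ^ (k : ℕ)) (f v)) ≤
        LinearMap.ker (f ^ (m + 1)) := by
      refine Submodule.span_le.mpr (Set.range_subset_iff.mpr fun k => ?_)
      rw [SetLike.mem_coe, LinearMap.mem_ker, ← Module.End.mul_apply, ← Module.End.mul_apply,
        ← pow_add, ← pow_succ, show m + 1 + k + 1 = k + (m + 1 + 1) by omega, pow_add,
        Module.End.mul_apply, hm', map_zero]
    rw [linearIndependent_finSucc, htail]
    refine ⟨ih (by rwa [← Module.End.mul_apply, ← pow_succ]) (by rwa [← Module.End.mul_apply,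
      ← pow_succ]), fun hv => hm (LinearMap.mem_ker.mp (hker hv))⟩

namespace Module.Basis

variable {R V : Type*} [Semiring R] [AddCommMonoid V] [Module R V] {n : ℕ}
  (ε : Module.Basis (Fin (n + 1)) R V) {N : V →ₗ[R] V}

theorem mem_span_castSucc_of_repr_last_eq_zero {x : V} (hx : ε.repr x (Fin.last n) = 0) :
    x ∈ Submodule.span R (Set.range fun i : Fin n => ε i.castSucc) := by
  rw [← ε.sum_repr x, Fin.sum_univ_castSucc, hx, zero_smul, add_zero]
  exact Submodule.sum_mem _ fun i _ => Submodule.smul_mem _ _ (Submodule.subset_span ⟨i, rfl⟩)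

theorem span_castSucc_le_range (hN : ∀ i : Fin n, N (ε i.succ) = ε i.castSucc) :
    Submodule.span R (Set.range fun i : Fin n => ε i.castSucc) ≤ LinearMap.range N :=
  Submodule.span_le.mpr <| Set.range_subset_iff.mpr fun i => ⟨ε i.succ, hN i⟩

theorem pow_val_succ_apply_eq_zero (hN0 : N (ε 0) = 0)
    (hN : ∀ i : Fin n, N (ε i.succ) = ε i.castSucc) (i : Fin (n + 1)) :
    (N ^ ((i : ℕ) + 1)) (ε i) = 0 := by
  induction i using Fin.induction with
  | zero => simpa using hN0
  | succ i ih => rwa [Fin.val_succ, pow_succ, Module.End.mul_apply, hN, ← Fin.val_castSucc]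

theorem pow_val_apply (hN : ∀ i : Fin n, N (ε i.succ) = ε i.castSucc) (i : Fin (n + 1)) :
    (N ^ (i : ℕ)) (ε i) = ε 0 := by
  induction i using Fin.induction with
  | zero => simp
  | succ i ih => rwa [Fin.val_succ, pow_succ, Module.End.mul_apply, hN, ← Fin.val_castSucc]

theorem pow_apply_eq_repr_last_smul (hN0 : N (ε 0) = 0)
    (hN : ∀ i : Fin n, N (ε i.succ) = ε i.castSucc) (x : V) :
    (N ^ n) x = ε.repr x (Fin.last n) • ε 0 := by
  have : N ^ n = (ε.coord (Fin.last n)).smulRight (ε 0) := ε.ext fun i => by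
    induction i using Fin.lastCases with
    | last => simpa using pow_val_apply ε hN (Fin.last n)
    | cast i =>
      have h := pow_val_succ_apply_eq_zero ε hN0 hN i.castSucc
      rw [Fin.val_castSucc] at h
      have hsplit : N ^ n = N ^ (n - (i + 1)) * N ^ ((i : ℕ) + 1) := by
        rw [← pow_add, Nat.sub_add_cancel (by omega)]
      rw [hsplit, Module.End.mul_apply, h, map_zero]
      simp [Fin.castSucc_ne_last]
  rw [this]
  rfl

theorem pow_succ_eq_zero (hN0 : N (ε 0) = 0) (hN : ∀ i : Fin n, N (ε i.succ) = ε i.castSucc) :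
    N ^ (n + 1) = 0 :=
  LinearMap.ext fun x => by
    rw [pow_succ', Module.End.mul_apply, pow_apply_eq_repr_last_smul ε hN0 hN, map_smul, hN0,
      smul_zero, LinearMap.zero_apply]

end Module.Basis

/-- Lemma 3.1 of the paper. Let `V` be an `(n+1)`-dimensional
ℚ-vector space with basis `ε 0, …, ε n`, `N` the lowering operator with
`N (ε 0) = 0` and `N (ε i) = ε (i-1)`, `Q` a nondegenerate bilinear form with
`Q(Nx,y) = −Q(x,Ny)`, `T` a `Q`-preserving map whose `T − I` has image in the
line spanned by `δ`, and `T (ε 0) ≠ ε 0`.  Then `δ` does not lie in the span of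
`ε 0, …, ε (n-1)`; equivalently, `δ, Nδ, …, N^n δ` form a basis of `V`. -/
theorem stmt0 (n : ℕ) (V : Type*) [AddCommGroup V] [Module ℚ V]
    (ε : Module.Basis (Fin (n + 1)) ℚ V)
    (N : V →ₗ[ℚ] V) (hN0 : N (ε 0) = 0)
    (hN : ∀ i : Fin n, N (ε i.succ) = ε i.castSucc)
    (Q : V →ₗ[ℚ] V →ₗ[ℚ] ℚ)
    (hQnd : ∀ x : V, (∀ y : V, Q x y = 0) → x = 0)
    (hQN : ∀ x y : V, Q (N x) y = - Q x (N y))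
    (T : V →ₗ[ℚ] V) (hT : ∀ x y : V, Q (T x) (T y) = Q x y)
    (δ : V) (hδ : ∀ x : V, T x - x ∈ Submodule.span ℚ {δ})
    (hTe : T (ε 0) ≠ ε 0) :
    δ ∉ Submodule.span ℚ (Set.range fun i : Fin n => ε i.castSucc) ∧
    LinearIndependent ℚ (fun k : Fin (n + 1) => (N ^ (k : ℕ)) δ) ∧
    Submodule.span ℚ (Set.range fun k : Fin (n + 1) => (N ^ (k : ℕ)) δ) = ⊤ := by
  have hδ_notMem : δ ∉ Submodule.span ℚ (Set.range fun i : Fin n => ε i.castSucc) := by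
    intro hmem
    obtain ⟨β, rfl⟩ := ε.span_castSucc_le_range hN hmem
    refine hTe (LinearMap.IsOrthogonal.apply_eq_self_of_orthogonal_direction hT hQnd hδ ?_ ?_)
    · rw [← neg_eq_zero, ← hQN, hN0, map_zero, LinearMap.zero_apply]
    · rw [hQN, hN0, map_zero, neg_zero]
  have hlast : ε.repr δ (Fin.last n) ≠ 0 := fun h =>
    hδ_notMem (ε.mem_span_castSucc_of_repr_last_eq_zero h)
  have hindep : LinearIndependent ℚ fun k : Fin (n + 1) => (N ^ (k : ℕ)) δ :=
    Module.End.linearIndependent_pow_apply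
      (by rw [ε.pow_apply_eq_repr_last_smul hN0 hN]; exact smul_ne_zero hlast (ε.ne_zero 0))
      (by rw [ε.pow_succ_eq_zero hN0 hN, LinearMap.zero_apply])
  have : FiniteDimensional ℚ V := .of_basis ε
  refine ⟨hδ_notMem, hindep, hindep.span_eq_top_of_card_eq_finrank' ?_⟩
  rw [Module.finrank_eq_card_basis ε]
end

section
/- Let n ≥ 0, let K be a field of characteristic zero, and let V be an (n+1)-dimensional K-vector space with basis ε°_0, …, ε°_n. Let N : V → V be the linear map with N ε°_0 = 0 and N ε°_j = ε°_{j−1} for 1 ≤ j ≤ n. Let T : V → V be a linear map, set δ := (T − I) ε°_0, and assume δ ≠ 0 and that the image of T − I is contained in the line K·δ. Then, setting ε_0 := ε°_0, there exist unique vectors ε_1, …, ε_n ∈ V such that N ε_j = ε_{j−1} for 1 ≤ j ≤ n and (T − I) ε_j = 0 for 1 ≤ j ≤ n. -/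
/-!
Every `y` can be corrected by a multiple of `ε° 0` to a fixed vector of `T`, because
`T y - y = c • δ = (T - I) (c • ε° 0)`; the correction does not change `N y` since `N (ε° 0) = 0`.
Lifting `ε (j-1) ∈ span (ε° 0, …, ε° (j-1))` through `N` into `span (ε° 0, …, ε° j)` and
correcting gives `ε j`. Two choices of `ε j` differ by an element of `ker N = K ∙ ε° 0` fixed
by `T`, and `(T - I) (c • ε° 0) = c • δ` vanishes only for `c = 0`.
-/

theorem Fin.exists_chain_of_step {α : Type*} {n : ℕ} (S : Fin (n + 1) → Set α)
    (r : Fin n → α → α → Prop) {a : α} (ha : a ∈ S 0)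
    (step : ∀ j, ∀ x ∈ S j.castSucc, ∃ y ∈ S j.succ, r j x y) :
    ∃ f : Fin (n + 1) → α, f 0 = a ∧ ∀ j, r j (f j.castSucc) (f j.succ) := by
  choose! g hgS hgr using step
  let f : Fin (n + 1) → α := Fin.induction a g
  have hfS : ∀ i, f i ∈ S i := by
    intro i
    induction i using Fin.induction with
    | zero => exact ha
    | succ j ih => simpa [f] using hgS j _ ih
  exact ⟨f, rfl, fun j => by simpa [f] using hgr j _ (hfS j.castSucc)⟩

namespace Module.Basis

variable {R V : Type*} [Ring R] [AddCommGroup V] [Module R V] {n : ℕ}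
  (b : Basis (Fin (n + 1)) R V) {N T : V →ₗ[R] V}

theorem repr_apply_castSucc_of_lowering (hN0 : N (b 0) = 0)
    (hN : ∀ j : Fin n, N (b j.succ) = b j.castSucc) (x : V) (j : Fin n) :
    b.repr (N x) j.castSucc = b.repr x j.succ := by
  suffices b.coord j.castSucc ∘ₗ N = b.coord j.succ from LinearMap.congr_fun this x
  refine b.ext fun i => ?_
  induction i using Fin.cases with
  | zero => simp [hN0]
  | succ i => simp [hN, Finsupp.single_apply]

theorem mem_span_zero_of_lowering_eq_zero (hN0 : N (b 0) = 0)
    (hN : ∀ j : Fin n, N (b j.succ) = b j.castSucc) {x : V} (hx : N x = 0) :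
    x ∈ R ∙ b 0 := by
  have hcoord (j : Fin n) : b.repr x j.succ = 0 := by
    rw [← b.repr_apply_castSucc_of_lowering hN0 hN, hx, map_zero, Finsupp.zero_apply]
  rw [Submodule.mem_span_singleton, ← b.sum_repr x, Fin.sum_univ_succ]
  exact ⟨b.repr x 0, by simp [hcoord]⟩

theorem flag_castSucc_le_map_flag_succ_of_lowering
    (hN : ∀ j : Fin n, N (b j.succ) = b j.castSucc) (k : Fin (n + 1)) :
    b.flag k.castSucc ≤ (b.flag k.succ).map N := by
  refine b.flag_le_iff.mpr fun i hi => ?_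
  obtain ⟨i, rfl⟩ :=
    Fin.exists_castSucc_eq.mpr (Fin.ne_last_of_lt (Fin.castSucc_lt_castSucc_iff.mp hi))
  rw [← hN]
  refine Submodule.mem_map_of_mem (b.self_mem_flag ?_)
  simp only [Fin.lt_def, Fin.val_castSucc, Fin.val_succ] at hi ⊢
  omega

theorem exists_fixed_lift_of_lowering (hN0 : N (b 0) = 0)
    (hN : ∀ j : Fin n, N (b j.succ) = b j.castSucc) (hT : ∀ x, T x - x ∈ R ∙ (T (b 0) - b 0))
    (k : Fin (n + 1)) {v : V} (hv : v ∈ b.flag k.castSucc) :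
    ∃ u ∈ b.flag k.succ, N u = v ∧ T u - u = 0 := by
  obtain ⟨y, hy, rfl⟩ := b.flag_castSucc_le_map_flag_succ_of_lowering hN k hv
  obtain ⟨c, hc⟩ := Submodule.mem_span_singleton.mp (hT y)
  refine ⟨y - c • b 0, sub_mem hy (Submodule.smul_mem _ _ (b.self_mem_flag (by simp))), ?_, ?_⟩
  · simp [hN0]
  · rw [map_sub, map_smul, sub_sub_sub_comm, ← hc, smul_sub, sub_self]

theorem eq_of_lowering_eq_of_fixed [IsDomain R] [Module.IsTorsionFree R V] (hN0 : N (b 0) = 0)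
    (hN : ∀ j : Fin n, N (b j.succ) = b j.castSucc) (hδ : T (b 0) - b 0 ≠ 0) {u u' : V}
    (hNu : N u = N u') (hTu : T u - u = 0) (hTu' : T u' - u' = 0) : u = u' := by
  have hker : N (u - u') = 0 := by rw [map_sub, hNu, sub_self]
  obtain ⟨c, hc⟩ :=
    Submodule.mem_span_singleton.mp (b.mem_span_zero_of_lowering_eq_zero hN0 hN hker)
  have hcδ : c • (T (b 0) - b 0) = 0 := by
    rw [smul_sub, ← map_smul T c (b 0), hc, map_sub, sub_sub_sub_comm, hTu, hTu', sub_self]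
  rw [← sub_eq_zero, ← hc, (smul_eq_zero.mp hcδ).resolve_right hδ, zero_smul]

end Module.Basis

theorem stmt1_general (n : ℕ) (K : Type*) [Field K]
    (V : Type*) [AddCommGroup V] [Module K V]
    (ε₀ : Module.Basis (Fin (n + 1)) K V)
    (N : V →ₗ[K] V) (hN0 : N (ε₀ 0) = 0)
    (hN : ∀ j : Fin n, N (ε₀ j.succ) = ε₀ j.castSucc)
    (T : V →ₗ[K] V)
    (δ : V) (hδdef : δ = T (ε₀ 0) - ε₀ 0) (hδ : δ ≠ 0)
    (him : ∀ x : V, T x - x ∈ Submodule.span K {δ}) :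
    ∃! ε : Fin (n + 1) → V, ε 0 = ε₀ 0 ∧
      (∀ j : Fin n, N (ε j.succ) = ε j.castSucc) ∧
      (∀ j : Fin n, T (ε j.succ) - ε j.succ = 0) := by
  subst hδdef
  obtain ⟨ε, hε0, hε⟩ := Fin.exists_chain_of_step (fun k => (ε₀.flag k.succ : Set V))
    (fun _ x y => N y = x ∧ T y - y = 0) (ε₀.self_mem_flag (Fin.castSucc_lt_succ (i := 0)))
    fun j _ hx => ε₀.exists_fixed_lift_of_lowering hN0 hN him j.succ (by rwa [← Fin.succ_castSucc])
  refine ⟨ε, ⟨hε0, fun j => (hε j).1, fun j => (hε j).2⟩, ?_⟩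
  rintro ε' ⟨hε'0, hε'N, hε'T⟩
  funext i
  induction i using Fin.induction with
  | zero => rw [hε'0, hε0]
  | succ j ih =>
    refine ε₀.eq_of_lowering_eq_of_fixed hN0 hN hδ ?_ (hε'T j) (hε j).2
    rw [hε'N, ih, (hε j).1]

/-- Lemma 3.1b of the paper. Let `V` be an `(n+1)`-dimensional
vector space over a field `K` of characteristic zero, with basis
`ε° 0, …, ε° n`, `N` the lowering operator, `T` a linear map with
`δ := (T − I) ε° 0 ≠ 0` and the image of `T − I` contained in the line `K·δ`.
Then, setting `ε 0 := ε° 0`, there exist unique `ε 1, …, ε n` with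
`N (ε j) = ε (j-1)` and `(T − I) (ε j) = 0` for `1 ≤ j ≤ n`. -/
theorem stmt1 (n : ℕ) (K : Type*) [Field K] [CharZero K]
    (V : Type*) [AddCommGroup V] [Module K V]
    (ε₀ : Module.Basis (Fin (n + 1)) K V)
    (N : V →ₗ[K] V) (hN0 : N (ε₀ 0) = 0)
    (hN : ∀ j : Fin n, N (ε₀ j.succ) = ε₀ j.castSucc)
    (T : V →ₗ[K] V)
    (δ : V) (hδdef : δ = T (ε₀ 0) - ε₀ 0) (hδ : δ ≠ 0)
    (him : ∀ x : V, T x - x ∈ Submodule.span K {δ}) :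
    ∃! ε : Fin (n + 1) → V, ε 0 = ε₀ 0 ∧
      (∀ j : Fin n, N (ε j.succ) = ε j.castSucc) ∧
      (∀ j : Fin n, T (ε j.succ) - ε j.succ = 0) :=
  stmt1_general n K V ε₀ N hN0 hN T δ hδdef hδ him
end

section
/- Let E be a finite-dimensional ℂ-vector space, let N : E → E be a nilpotent linear map whose kernel is one-dimensional, let δ ∈ E be nonzero, and let T : E → E be a linear map such that the image of T − I is contained in the line ℂ·δ and ker(N) ∩ ker(T − I) = {0}. Then for every integer k with 1 ≤ k ≤ dim E, the linear map x ↦ (N x, (T − I) x) is an isomorphism from ker(N^k) onto ker(N^{k−1}) ⊕ ℂ·δ. -/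
section Aux

variable {E : Type*} [AddCommGroup E] [Module ℂ E] [FiniteDimensional ℂ E]

/-- Step bound: the kernel of `N^(k+1)` has dimension at most one more than
that of `N^k`, when `ker N` is one-dimensional. -/
lemma stmt9_step (N : E →ₗ[ℂ] E) (hker : Module.finrank ℂ (LinearMap.ker N) = 1) (k : ℕ) :
    Module.finrank ℂ (LinearMap.ker (N ^ (k + 1))) ≤
      Module.finrank ℂ (LinearMap.ker (N ^ k)) + 1 := by
  have hmap : ∀ x ∈ LinearMap.ker (N ^ (k + 1)), N x ∈ LinearMap.ker (N ^ k) := by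
    intro x hx
    rw [LinearMap.mem_ker] at hx ⊢
    have : (N ^ k * N) x = 0 := by rw [← pow_succ]; exact hx
    simpa using this
  let f : ↥(LinearMap.ker (N ^ (k + 1))) →ₗ[ℂ] ↥(LinearMap.ker (N ^ k)) := N.restrict hmap
  have h1 := LinearMap.finrank_range_add_finrank_ker f
  have h2 : Module.finrank ℂ (LinearMap.range f) ≤ Module.finrank ℂ (LinearMap.ker (N ^ k)) :=
    Submodule.finrank_le _
  have h3 : Module.finrank ℂ (LinearMap.ker f) ≤ Module.finrank ℂ (LinearMap.ker N) := by
    let g : ↥(LinearMap.ker f) →ₗ[ℂ] ↥(LinearMap.ker N) :=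
      { toFun := fun x => ⟨x.1.1, by
          have hx := x.2
          rw [LinearMap.mem_ker] at hx
          have := congrArg Subtype.val hx
          exact this⟩
        map_add' := fun x y => rfl
        map_smul' := fun c x => rfl }
    have ginj : Function.Injective g := by
      intro x y hxy
      have h := congrArg Subtype.val hxy
      exact Subtype.ext (Subtype.ext h)
    exact LinearMap.finrank_le_finrank_of_injective ginj
  omega

lemma stmt9_dim (N : E →ₗ[ℂ] E) (hNnil : IsNilpotent N)
    (hker : Module.finrank ℂ (LinearMap.ker N) = 1)
    (j : ℕ) (hj : j + 1 ≤ Module.finrank ℂ E) :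
    Module.finrank ℂ (LinearMap.ker (N ^ (j + 1))) =
      Module.finrank ℂ (LinearMap.ker (N ^ j)) + 1 := by
  have hle : ∀ k : ℕ, Module.finrank ℂ (LinearMap.ker (N ^ k)) ≤ k := by
    intro k
    induction k with
    | zero => simp [Module.End.one_eq_id, finrank_bot]
    | succ k ih =>
        have := stmt9_step N hker k
        omega
  have hne : LinearMap.ker (N ^ j) ≠ LinearMap.ker (N ^ (j + 1)) := by
    intro heq
    obtain ⟨M, hM⟩ := hNnil
    have htop : LinearMap.ker (N ^ j) = ⊤ := by
      have := Module.End.ker_pow_constant heq M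
      rw [this, pow_add, hM, mul_zero]
      exact LinearMap.ker_zero
    have : Module.finrank ℂ (LinearMap.ker (N ^ j)) = Module.finrank ℂ E := by
      rw [htop]; exact finrank_top ℂ E
    have := hle j
    omega
  have hlt : LinearMap.ker (N ^ j) < LinearMap.ker (N ^ (j + 1)) := by
    refine lt_of_le_of_ne ?_ hne
    rw [pow_succ', Module.End.mul_eq_comp]
    exact LinearMap.ker_le_ker_comp _ _
  have := Submodule.finrank_lt_finrank_of_lt hlt
  have := stmt9_step N hker j
  omega

end Aux

/-- key isomorphism in the proof of Theorem 7.1 of the paper.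
Let `E` be a finite-dimensional ℂ-vector space, `N` nilpotent with
one-dimensional kernel, `δ ≠ 0`, `T` with `im(T − I) ⊆ ℂ·δ` and
`ker N ∩ ker(T − I) = 0`.  Then for `1 ≤ k ≤ dim E` (written `k = j + 1`), the
map `x ↦ (N x, (T − I) x)` is an isomorphism from `ker (N^k)` onto
`ker (N^{k−1}) ⊕ ℂ·δ`. -/
theorem stmt9 (E : Type*) [AddCommGroup E] [Module ℂ E] [FiniteDimensional ℂ E]
    (N T : E →ₗ[ℂ] E) (hNnil : IsNilpotent N)
    (hker : Module.finrank ℂ (LinearMap.ker N) = 1)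
    (δ : E) (hδ : δ ≠ 0)
    (hT : ∀ x : E, T x - x ∈ Submodule.span ℂ {δ})
    (hdisj : LinearMap.ker N ⊓ LinearMap.ker (T - LinearMap.id) = ⊥)
    (j : ℕ) (hj : j + 1 ≤ Module.finrank ℂ E) :
    Function.Bijective (fun x : LinearMap.ker (N ^ (j + 1)) =>
      ((⟨N x.1, LinearMap.mem_ker.mpr (by
          have hx : (N ^ (j + 1)) x.1 = 0 := LinearMap.mem_ker.mp x.2
          show (N ^ j) (N x.1) = 0
          have h2 : (N ^ j * N) x.1 = 0 := by rw [← pow_succ]; exact hx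
          exact h2)⟩ : LinearMap.ker (N ^ j)),
        (⟨T x.1 - x.1, hT x.1⟩ : Submodule.span ℂ {δ}))) := by
  -- package the map as a linear map
  have hmap : ∀ x ∈ LinearMap.ker (N ^ (j + 1)), N x ∈ LinearMap.ker (N ^ j) := by
    intro x hx
    rw [LinearMap.mem_ker] at hx ⊢
    have : (N ^ j * N) x = 0 := by rw [← pow_succ]; exact hx
    simpa using this
  let f1 : ↥(LinearMap.ker (N ^ (j + 1))) →ₗ[ℂ] ↥(LinearMap.ker (N ^ j)) := N.restrict hmap
  let f2 : ↥(LinearMap.ker (N ^ (j + 1))) →ₗ[ℂ] ↥(Submodule.span ℂ {δ}) :=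
    { toFun := fun x => ⟨T x.1 - x.1, hT x.1⟩
      map_add' := fun x y => by
        apply Subtype.ext
        simp only [Submodule.coe_add, map_add]
        abel
      map_smul' := fun c x => by
        apply Subtype.ext
        simp [smul_sub] }
  let L := LinearMap.prod f1 f2
  have hLinj : Function.Injective L := by
    rw [← LinearMap.ker_eq_bot]
    rw [Submodule.eq_bot_iff]
    intro x hx
    rw [LinearMap.mem_ker] at hx
    have h1 : N x.1 = 0 := by
      have := congrArg Prod.fst hx
      exact congrArg Subtype.val this
    have h2 : T x.1 - x.1 = 0 := by
      have := congrArg Prod.snd hx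
      exact congrArg Subtype.val this
    have hx0 : x.1 ∈ LinearMap.ker N ⊓ LinearMap.ker (T - LinearMap.id) := by
      refine Submodule.mem_inf.mpr ⟨LinearMap.mem_ker.mpr h1, LinearMap.mem_ker.mpr ?_⟩
      rw [LinearMap.sub_apply, LinearMap.id_apply]
      exact h2
    rw [hdisj] at hx0
    exact Subtype.ext hx0
  have hdim : Module.finrank ℂ ↥(LinearMap.ker (N ^ (j + 1))) =
      Module.finrank ℂ (↥(LinearMap.ker (N ^ j)) × ↥(Submodule.span ℂ {δ})) := by
    rw [Module.finrank_prod, finrank_span_singleton hδ]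
    exact stmt9_dim N hNnil hker j hj
  have hLbij : Function.Bijective L :=
    ⟨hLinj, (LinearMap.injective_iff_surjective_of_finrank_eq_finrank hdim).mp hLinj⟩
  have hfun : (fun x : LinearMap.ker (N ^ (j + 1)) =>
      ((⟨N x.1, LinearMap.mem_ker.mpr (by
          have hx : (N ^ (j + 1)) x.1 = 0 := LinearMap.mem_ker.mp x.2
          show (N ^ j) (N x.1) = 0
          have h2 : (N ^ j * N) x.1 = 0 := by rw [← pow_succ]; exact hx
          exact h2)⟩ : LinearMap.ker (N ^ j)),
        (⟨T x.1 - x.1, hT x.1⟩ : Submodule.span ℂ {δ}))) = ⇑L := by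
    funext x
    refine Prod.ext (Subtype.ext rfl) (Subtype.ext rfl)
  rw [hfun]
  exact hLbij
end

section
/- For every s ∈ ℂ with Re(s) > 0, s · ∫_{0}^{1/4} t^{s−1} (1 − 4t)^{−1/2} dt = Γ(1 + s)² / Γ(1 + 2s), where the integral is over real t ∈ (0, 1/4) and t^{s−1} := exp((s−1)·log t) for t > 0 (and (1−4t)^{−1/2} is the positive real square root reciprocal). -/
open Complex Real MeasureTheory intervalIntegral

lemma integ_eq (s : ℂ) (hs : 0 < s.re) :
    (∫ t in (0 : ℝ)..(1 / 4 : ℝ),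
        (t : ℂ) ^ (s - 1) * ((Real.sqrt (1 - 4 * t) : ℂ))⁻¹)
    = (4 : ℂ) ^ (-s) * Complex.betaIntegral s (1 / 2) := by
  have h4 : ((4:ℝ))⁻¹ • Complex.betaIntegral s (1/2)
      = ∫ t in (0:ℝ)..(1/4 : ℝ),
          ((t*4 : ℝ) : ℂ) ^ (s - 1) * (1 - ((t*4 : ℝ) : ℂ)) ^ ((1/2 : ℂ) - 1) := by
    rw [intervalIntegral.integral_comp_mul_right
      (fun x : ℝ => ((x : ℝ) : ℂ) ^ (s - 1) * (1 - ((x : ℝ) : ℂ)) ^ ((1/2 : ℂ) - 1))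
      (by norm_num : (4:ℝ) ≠ 0)]
    norm_num [Complex.betaIntegral]
  have key : ∀ t ∈ Set.uIoc (0:ℝ) (1/4 : ℝ),
      ((t*4 : ℝ) : ℂ) ^ (s - 1) * (1 - ((t*4 : ℝ) : ℂ)) ^ ((1/2 : ℂ) - 1)
      = (4:ℂ) ^ (s-1) * ((t : ℂ) ^ (s - 1) * ((Real.sqrt (1 - 4 * t) : ℂ))⁻¹) := by
    intro t ht
    rw [Set.uIoc_of_le (by norm_num : (0:ℝ) ≤ 1/4)] at ht
    obtain ⟨ht0, ht1⟩ := ht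
    have h1 : ((t*4 : ℝ) : ℂ) ^ (s - 1) = (4:ℂ)^(s-1) * (t:ℂ)^(s-1) := by
      rw [Complex.ofReal_mul, Complex.mul_cpow_ofReal_nonneg ht0.le (by norm_num)]
      norm_num [mul_comm]
    have hnn : (0:ℝ) ≤ 1 - 4*t := by linarith
    have h2 : (1 - ((t*4 : ℝ) : ℂ)) ^ ((1/2 : ℂ) - 1)
        = ((Real.sqrt (1 - 4 * t) : ℂ))⁻¹ := by
      have he : (1 - ((t*4 : ℝ) : ℂ)) = (((1 - 4*t : ℝ)) : ℂ) := by push_cast; ring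
      rw [he, Real.sqrt_eq_rpow, show ((1/2 : ℂ) - 1) = -(((1/2:ℝ)):ℂ) by norm_num,
        Complex.cpow_neg, ← Complex.ofReal_cpow hnn]
    rw [h1, h2]; ring
  rw [intervalIntegral.integral_congr_ae (Filter.Eventually.of_forall key),
    intervalIntegral.integral_const_mul] at h4
  have h4ne : (4:ℂ)^(s-1) ≠ 0 := by
    simp [Complex.cpow_eq_zero_iff]
  have hmain : (∫ t in (0:ℝ)..(1/4:ℝ), (t : ℂ) ^ (s - 1) * ((Real.sqrt (1 - 4 * t) : ℂ))⁻¹)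
      = ((4:ℂ)^(s-1))⁻¹ * (((4:ℝ))⁻¹ • Complex.betaIntegral s (1/2)) := by
    rw [h4]; field_simp
  rw [hmain, Complex.real_smul]
  push_cast
  rw [show -s = -(s-1) + (-1 : ℂ) by ring, Complex.cpow_add _ _ (by norm_num : (4:ℂ) ≠ 0),
    Complex.cpow_neg, Complex.cpow_neg_one]
  ring

/-- Example 6.1 of the paper.  For `Re(s) > 0`,
`s·∫_0^{1/4} t^{s−1}(1−4t)^{−1/2} dt = Γ(1+s)²/Γ(1+2s)`; this computes the
kappa series of the CY 0-fold family attached to `φ = −x + 2 − x⁻¹`. -/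
theorem stmt13 (s : ℂ) (hs : 0 < s.re) :
    s * ∫ t in (0 : ℝ)..(1 / 4 : ℝ),
        (t : ℂ) ^ (s - 1) * ((Real.sqrt (1 - 4 * t) : ℂ))⁻¹ =
      Complex.Gamma (1 + s) ^ 2 / Complex.Gamma (1 + 2 * s) := by
  rw [integ_eq s hs]
  have hhalf : (0:ℝ) < (1/2 : ℂ).re := by norm_num
  have hbeta : Complex.Gamma s * Complex.Gamma (1/2)
      = Complex.Gamma (s + 1/2) * Complex.betaIntegral s (1/2) :=
    Complex.Gamma_mul_Gamma_eq_betaIntegral hs hhalf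
  have hs0 : s ≠ 0 := fun h => by simp [h] at hs
  have hΓs : Complex.Gamma s ≠ 0 := Complex.Gamma_ne_zero_of_re_pos hs
  have hΓh : Complex.Gamma (s + 1/2) ≠ 0 :=
    Complex.Gamma_ne_zero_of_re_pos (by simp; linarith)
  have hΓ2 : Complex.Gamma (2*s) ≠ 0 :=
    Complex.Gamma_ne_zero_of_re_pos (by simp; linarith)
  have hB : Complex.betaIntegral s (1/2)
      = Complex.Gamma s * Complex.Gamma (1/2) / Complex.Gamma (s + 1/2) := by
    rw [hbeta, mul_div_cancel_left₀ _ hΓh]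
  have hG12 : Complex.Gamma (1/2 : ℂ) = ((Real.sqrt π : ℝ) : ℂ) := by
    rw [show ((1:ℂ)/2) = (((1/2 : ℝ)):ℂ) by norm_num, Complex.Gamma_ofReal,
      Real.Gamma_one_half_eq]
  have hdup := Complex.Gamma_mul_Gamma_add_half s
  have h1s : Complex.Gamma (1 + s) = s * Complex.Gamma s := by
    rw [add_comm, Complex.Gamma_add_one s hs0]
  have h12s : Complex.Gamma (1 + 2*s) = 2*s * Complex.Gamma (2*s) := by
    rw [add_comm, Complex.Gamma_add_one _ (by simpa using hs0)]
  have e1 : (4:ℂ)^(-s) = (2:ℂ)^(-s) * (2:ℂ)^(-s) := by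
    rw [show (4:ℂ) = ((2:ℝ):ℂ)*((2:ℝ):ℂ) by norm_num,
      Complex.mul_cpow_ofReal_nonneg (by norm_num) (by norm_num)]
    norm_num
  have h2A : (2:ℂ)^(1-2*s) = 2 * (4:ℂ)^(-s) := by
    rw [show (1:ℂ)-2*s = 1 + -s + -s by ring, Complex.cpow_add _ _ two_ne_zero,
      Complex.cpow_add _ _ two_ne_zero, Complex.cpow_one, e1]
    ring
  rw [hB, hG12, h1s, h12s]
  rw [h2A] at hdup
  have hden : 2*s*Complex.Gamma (2*s) ≠ 0 := mul_ne_zero (mul_ne_zero two_ne_zero hs0) hΓ2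
  have lhs_eq : s * ((4:ℂ)^(-s) * (Complex.Gamma s * ((Real.sqrt π : ℝ):ℂ) / Complex.Gamma (s+1/2)))
      = (s * (4:ℂ)^(-s) * Complex.Gamma s * ((Real.sqrt π : ℝ):ℂ)) / Complex.Gamma (s+1/2) := by ring
  rw [lhs_eq, div_eq_div_iff hΓh hden]
  linear_combination (-(s^2) * Complex.Gamma s) * hdup
end

section
/- For every s ∈ ℂ with |s| < 1/2, the series ∑_{k=2}^{∞} ((−1)^{k−1}/k)·(2^{k−1} − 1)·ζ(k)·s^k converges absolutely and Γ(1 + s)² / Γ(1 + 2s) = exp( 2·∑_{k=2}^{∞} ((−1)^{k−1}/k)·(2^{k−1} − 1)·ζ(k)·s^k ). -/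
/-!
Euler's product gives `Γ(1+s) Γ(1+t) / Γ(1+s+t) = ∏_{j ≥ 1} j (j+s+t) / ((j+s) (j+t))`.
The logarithm of the `j`-th factor is
`log (1 + (s+t)/j) - log (1 + s/j) - log (1 + t/j) = ∑_k (-1)^(k+1) ((s+t)^k - s^k - t^k) / (k j^k)`,
whose terms with `k < 2` vanish. Hence for `‖s‖ + ‖t‖ < 1` the double series is absolutely
convergent, dominated by `3 (‖s‖ + ‖t‖)^k / j^2`, and summing over `j` first turns `∑_j j^(-k)`
into `ζ(k)`. The statement is the case `t = s`.
-/

open Complex Filter Finset Topology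
open scoped Nat

lemma re_one_add_pos_of_norm_lt_one {z : ℂ} (hz : ‖z‖ < 1) : 0 < (1 + z).re := by
  rw [add_re, one_re]
  linarith [neg_le_of_abs_le (abs_re_le_norm z)]

lemma add_natCast_ne_zero_of_re_pos {z : ℂ} (hz : 0 < z.re) (j : ℕ) : z + j ≠ 0 :=
  ne_zero_of_re_pos (by rw [add_re, natCast_re]; positivity)

lemma norm_lt_one_of_norm_add_norm_lt_one {s t : ℂ} (hst : ‖s‖ + ‖t‖ < 1) :
    ‖s‖ < 1 ∧ ‖t‖ < 1 ∧ ‖s + t‖ < 1 :=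
  ⟨by linarith [norm_nonneg t], by linarith [norm_nonneg s], (norm_add_le s t).trans_lt hst⟩

noncomputable def eulerFactor (s t : ℂ) (j : ℕ) : ℂ :=
  (j + 1) * (1 + s + t + j) / ((1 + s + j) * (1 + t + j))

lemma GammaSeq_mul_GammaSeq_div_GammaSeq {s t : ℂ} (hs : 0 < (1 + s).re) (ht : 0 < (1 + t).re)
    (hst : 0 < (1 + s + t).re) {n : ℕ} (hn : n ≠ 0) :
    GammaSeq (1 + s) n * GammaSeq (1 + t) n / GammaSeq (1 + s + t) n =
      n / (n + 1) * ∏ j ∈ range (n + 1), eulerFactor s t j := by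
  have hn' : (n : ℂ) ≠ 0 := Nat.cast_ne_zero.mpr hn
  have hprod (z : ℂ) (hz : 0 < z.re) : ∏ j ∈ range (n + 1), (z + j) ≠ 0 :=
    prod_ne_zero_iff.mpr fun j _ ↦ add_natCast_ne_zero_of_re_pos hz j
  have hcpow : (n : ℂ) ^ (1 + s) * (n : ℂ) ^ (1 + t) = (n : ℂ) ^ (1 + s + t) * n := by
    rw [← cpow_add _ _ hn', show 1 + s + (1 + t) = 1 + s + t + 1 by ring, cpow_add _ _ hn',
      cpow_one]
  have hfact : ∏ j ∈ range (n + 1), ((j : ℂ) + 1) = (n + 1) * n ! := by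
    rw [← Nat.cast_succ, ← Nat.cast_mul, ← Nat.factorial_succ, ← prod_range_add_one_eq_factorial]
    push_cast
    rfl
  simp only [GammaSeq, eulerFactor, prod_div_distrib, prod_mul_distrib, hfact]
  have hPs := hprod _ hs
  have hPt := hprod _ ht
  have hPst := hprod _ hst
  have hn1 : (n : ℂ) + 1 ≠ 0 := by exact_mod_cast n.succ_ne_zero
  have hnpow : (n : ℂ) ^ (1 + s + t) ≠ 0 := by simp [cpow_eq_zero_iff, hn']
  field_simp
  linear_combination (n ! : ℂ) * hcpow

lemma tendsto_prod_eulerFactor {s t : ℂ} (hs : 0 < (1 + s).re) (ht : 0 < (1 + t).re)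
    (hst : 0 < (1 + s + t).re) :
    Tendsto (fun n ↦ ∏ j ∈ range n, eulerFactor s t j) atTop
      (𝓝 (Gamma (1 + s) * Gamma (1 + t) / Gamma (1 + s + t))) := by
  have hGamma : Tendsto (fun n ↦ GammaSeq (1 + s) n * GammaSeq (1 + t) n / GammaSeq (1 + s + t) n)
      atTop (𝓝 (Gamma (1 + s) * Gamma (1 + t) / Gamma (1 + s + t))) :=
    ((GammaSeq_tendsto_Gamma _).mul (GammaSeq_tendsto_Gamma _)).div (GammaSeq_tendsto_Gamma _)
      (Gamma_ne_zero_of_re_pos hst)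
  have hquot := hGamma.div (tendsto_natCast_div_add_atTop (1 : ℂ)) one_ne_zero
  rw [div_one] at hquot
  refine (tendsto_add_atTop_iff_nat 1).mp (hquot.congr' ?_)
  filter_upwards [eventually_ne_atTop 0] with n hn
  have hfrac : (n : ℂ) / (n + 1) ≠ 0 :=
    div_ne_zero (Nat.cast_ne_zero.mpr hn) (by exact_mod_cast n.succ_ne_zero)
  rw [Pi.div_apply, GammaSeq_mul_GammaSeq_div_GammaSeq hs ht hst hn, mul_div_cancel_left₀ _ hfrac]

-- The `k = 0` coefficient vanishes only through `x / 0 = 0`, as in `hasSum_taylorSeries_log`.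
noncomputable def logRatioCoeff (s t : ℂ) (k : ℕ) : ℂ :=
  (-1) ^ (k + 1) * ((s + t) ^ k - s ^ k - t ^ k) / k

lemma logRatioCoeff_of_lt_two (s t : ℂ) {k : ℕ} (hk : k < 2) : logRatioCoeff s t k = 0 := by
  interval_cases k <;> simp [logRatioCoeff]

lemma norm_logRatioCoeff_le (s t : ℂ) (k : ℕ) :
    ‖logRatioCoeff s t k‖ ≤ 3 * (‖s‖ + ‖t‖) ^ k := by
  rcases k.eq_zero_or_pos with rfl | hk
  · simp [logRatioCoeff]
  have hs : ‖s‖ ^ k ≤ (‖s‖ + ‖t‖) ^ k := by gcongr; exact le_add_of_nonneg_right (norm_nonneg t)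
  have ht : ‖t‖ ^ k ≤ (‖s‖ + ‖t‖) ^ k := by gcongr; exact le_add_of_nonneg_left (norm_nonneg s)
  have hst : ‖s + t‖ ^ k ≤ (‖s‖ + ‖t‖) ^ k := by gcongr; exact norm_add_le s t
  calc ‖logRatioCoeff s t k‖ = ‖(s + t) ^ k - s ^ k - t ^ k‖ / k := by
        simp [logRatioCoeff]
    _ ≤ ‖(s + t) ^ k - s ^ k - t ^ k‖ := div_le_self (norm_nonneg _) (by exact_mod_cast hk)
    _ ≤ ‖s + t‖ ^ k + ‖s‖ ^ k + ‖t‖ ^ k := by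
        grw [norm_sub_le, norm_sub_le, norm_pow, norm_pow, norm_pow]
    _ ≤ 3 * (‖s‖ + ‖t‖) ^ k := by linarith

lemma hasSum_logRatioCoeff_mul_pow {s t x : ℂ} (hst : ‖s‖ + ‖t‖ < 1) (hx : ‖x‖ ≤ 1) :
    HasSum (fun k ↦ logRatioCoeff s t k * x ^ k)
      (log (1 + (s + t) * x) - log (1 + s * x) - log (1 + t * x)) := by
  obtain ⟨hs, ht, hadd⟩ := norm_lt_one_of_norm_add_norm_lt_one hst
  have hlog {z : ℂ} (hz : ‖z‖ < 1) := hasSum_taylorSeries_log (z := z * x) <| by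
    rw [norm_mul]; exact mul_lt_one_of_nonneg_of_lt_one_left (norm_nonneg z) hz hx
  refine (((hlog hadd).sub (hlog hs)).sub (hlog ht)).congr_fun fun k ↦ ?_
  simp only [logRatioCoeff, mul_pow]
  ring

noncomputable def logEulerFactor (s t : ℂ) (j : ℕ) : ℂ :=
  log (1 + (s + t) * (j + 1 : ℂ)⁻¹) - log (1 + s * (j + 1 : ℂ)⁻¹) - log (1 + t * (j + 1 : ℂ)⁻¹)

lemma norm_inv_natCast_add_one_le_one (j : ℕ) : ‖(j + 1 : ℂ)⁻¹‖ ≤ 1 := by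
  rw [norm_inv, ← Nat.cast_succ, norm_natCast]
  exact inv_le_one_of_one_le₀ (by exact_mod_cast j.succ_pos)

lemma hasSum_logEulerFactor {s t : ℂ} (hst : ‖s‖ + ‖t‖ < 1) (j : ℕ) :
    HasSum (fun k ↦ logRatioCoeff s t k * ((j + 1 : ℂ)⁻¹) ^ k) (logEulerFactor s t j) :=
  hasSum_logRatioCoeff_mul_pow hst (norm_inv_natCast_add_one_le_one j)

lemma exp_logEulerFactor {s t : ℂ} (hst : ‖s‖ + ‖t‖ < 1) (j : ℕ) :
    exp (logEulerFactor s t j) = eulerFactor s t j := by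
  obtain ⟨hs, ht, hadd⟩ := norm_lt_one_of_norm_add_norm_lt_one hst
  have hj : (j + 1 : ℂ) ≠ 0 := by exact_mod_cast j.succ_ne_zero
  have hne {z : ℂ} (hz : ‖z‖ < 1) : 1 + z + j ≠ 0 :=
    add_natCast_ne_zero_of_re_pos (re_one_add_pos_of_norm_lt_one hz) j
  have hfactor (z : ℂ) : 1 + z * (j + 1 : ℂ)⁻¹ = (1 + z + j) / (j + 1) := by
    field_simp
    ring
  have hne' {z : ℂ} (hz : ‖z‖ < 1) : 1 + z * (j + 1 : ℂ)⁻¹ ≠ 0 := by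
    rw [hfactor]; exact div_ne_zero (hne hz) hj
  rw [logEulerFactor, exp_sub, exp_sub, exp_log (hne' hadd), exp_log (hne' hs), exp_log (hne' ht),
    hfactor, hfactor, hfactor, eulerFactor, show 1 + (s + t) + (j : ℂ) = 1 + s + t + j by ring]
  field_simp

lemma summable_logRatioCoeff_mul_inv_pow {s t : ℂ} (hst : ‖s‖ + ‖t‖ < 1) :
    Summable fun p : ℕ × ℕ ↦ logRatioCoeff s t p.1 * ((p.2 + 1 : ℂ)⁻¹) ^ p.1 := by
  have hgeom : Summable fun k : ℕ ↦ 3 * (‖s‖ + ‖t‖) ^ k :=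
    (summable_geometric_of_lt_one (by positivity) hst).mul_left 3
  have hinvSq : Summable fun j : ℕ ↦ ((j + 1 : ℝ) ^ 2)⁻¹ := by
    simpa using (summable_nat_add_iff 1).mpr (Real.summable_nat_pow_inv.mpr one_lt_two)
  refine Summable.of_norm_bounded (hgeom.mul_of_nonneg hinvSq (fun _ ↦ by positivity)
    (fun _ ↦ by positivity)) fun ⟨k, j⟩ ↦ ?_
  rcases lt_or_ge k 2 with hk | hk
  · simp only [logRatioCoeff_of_lt_two s t hk, zero_mul, norm_zero]
    positivity
  have hx : ‖((j + 1 : ℂ)⁻¹) ^ k‖ ≤ ((j + 1 : ℝ) ^ 2)⁻¹ :=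
    calc ‖((j + 1 : ℂ)⁻¹) ^ k‖ = ‖(j + 1 : ℂ)⁻¹‖ ^ k := norm_pow _ _
      _ ≤ ‖(j + 1 : ℂ)⁻¹‖ ^ 2 :=
        pow_le_pow_of_le_one (norm_nonneg _) (norm_inv_natCast_add_one_le_one j) hk
      _ = ((j + 1 : ℝ) ^ 2)⁻¹ := by
        rw [norm_inv, ← Nat.cast_succ, norm_natCast, inv_pow, Nat.cast_succ]
  rw [norm_mul]
  gcongr
  exact norm_logRatioCoeff_le s t k

lemma tsum_logRatioCoeff_mul_inv_pow (s t : ℂ) (k : ℕ) :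
    ∑' j : ℕ, logRatioCoeff s t k * ((j + 1 : ℂ)⁻¹) ^ k = logRatioCoeff s t k * riemannZeta k := by
  rcases lt_or_ge k 2 with hk | hk
  · simp [logRatioCoeff_of_lt_two s t hk]
  rw [tsum_mul_left, zeta_eq_tsum_one_div_nat_add_one_cpow (by rw [natCast_re]; exact_mod_cast hk)]
  simp [cpow_natCast, inv_pow]

lemma summable_norm_logRatioCoeff_mul_riemannZeta {s t : ℂ} (hst : ‖s‖ + ‖t‖ < 1) :
    Summable fun k : ℕ ↦ ‖logRatioCoeff s t k * riemannZeta k‖ := by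
  have hf := (summable_logRatioCoeff_mul_inv_pow hst).norm
  refine hf.prod.of_nonneg_of_le (fun _ ↦ norm_nonneg _) fun k ↦ ?_
  rw [← tsum_logRatioCoeff_mul_inv_pow]
  exact norm_tsum_le_tsum_norm (hf.prod_factor k)

theorem Gamma_one_add_mul_Gamma_one_add_div_Gamma_eq_exp_tsum {s t : ℂ} (hst : ‖s‖ + ‖t‖ < 1) :
    Gamma (1 + s) * Gamma (1 + t) / Gamma (1 + s + t) =
      exp (∑' k : ℕ, logRatioCoeff s t k * riemannZeta k) := by
  have hf := summable_logRatioCoeff_mul_inv_pow hst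
  have hlog : Summable (logEulerFactor s t) :=
    hf.prod_symm.prod.congr fun j ↦ (hasSum_logEulerFactor hst j).tsum_eq
  have htsum : ∑' j, logEulerFactor s t j = ∑' k : ℕ, logRatioCoeff s t k * riemannZeta k :=
    calc ∑' j, logEulerFactor s t j
        = ∑' (j : ℕ) (k : ℕ), logRatioCoeff s t k * ((j + 1 : ℂ)⁻¹) ^ k :=
          tsum_congr fun j ↦ (hasSum_logEulerFactor hst j).tsum_eq.symm
      _ = ∑' (k : ℕ) (j : ℕ), logRatioCoeff s t k * ((j + 1 : ℂ)⁻¹) ^ k := hf.tsum_comm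
      _ = ∑' k : ℕ, logRatioCoeff s t k * riemannZeta k :=
          tsum_congr (tsum_logRatioCoeff_mul_inv_pow s t)
  have hexp : Tendsto (fun n ↦ ∏ j ∈ range n, eulerFactor s t j) atTop
      (𝓝 (exp (∑' j, logEulerFactor s t j))) := by
    refine ((continuous_exp.tendsto _).comp hlog.hasSum.tendsto_sum_nat).congr fun n ↦ ?_
    simp only [Function.comp_apply, exp_sum, exp_logEulerFactor hst]
  obtain ⟨hs, ht, hadd⟩ := norm_lt_one_of_norm_add_norm_lt_one hst
  have hadd' : 0 < (1 + s + t).re := by rw [add_assoc]; exact re_one_add_pos_of_norm_lt_one hadd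
  rw [← htsum]
  exact tendsto_nhds_unique (tendsto_prod_eulerFactor (re_one_add_pos_of_norm_lt_one hs)
    (re_one_add_pos_of_norm_lt_one ht) hadd') hexp

lemma ite_eq_logRatioCoeff_self_mul_riemannZeta_div_two (s : ℂ) (k : ℕ) :
    (if 2 ≤ k then ((-1 : ℂ) ^ (k - 1) / (k : ℂ)) * ((2 : ℂ) ^ (k - 1) - 1) *
      riemannZeta (k : ℂ) * s ^ k else 0) = logRatioCoeff s s k * riemannZeta k / 2 := by
  rcases lt_or_ge k 2 with hk | hk
  · simp [logRatioCoeff_of_lt_two s s hk, hk.not_ge]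
  obtain ⟨m, rfl⟩ := Nat.exists_eq_add_of_le' hk
  simp only [if_pos hk, logRatioCoeff, ← two_mul, mul_pow, pow_succ]
  push_cast
  ring

/-- Example 6.1 of the paper.  For `|s| < 1/2`, the series
`∑_{k≥2} ((−1)^{k−1}/k)(2^{k−1}−1)ζ(k)s^k` converges absolutely and
`Γ(1+s)²/Γ(1+2s) = exp(2·∑_{k≥2} ((−1)^{k−1}/k)(2^{k−1}−1)ζ(k)s^k)`. -/
theorem stmt14 (s : ℂ) (hs : ‖s‖ < 1 / 2) :
    Summable (fun k : ℕ => ‖(if 2 ≤ k then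
      ((-1 : ℂ) ^ (k - 1) / (k : ℂ)) * ((2 : ℂ) ^ (k - 1) - 1) *
        riemannZeta (k : ℂ) * s ^ k else 0)‖) ∧
    Complex.Gamma (1 + s) ^ 2 / Complex.Gamma (1 + 2 * s) =
      Complex.exp (2 * ∑' k : ℕ, (if 2 ≤ k then
        ((-1 : ℂ) ^ (k - 1) / (k : ℂ)) * ((2 : ℂ) ^ (k - 1) - 1) *
          riemannZeta (k : ℂ) * s ^ k else 0)) := by
  have hss : ‖s‖ + ‖s‖ < 1 := by linarith
  simp only [ite_eq_logRatioCoeff_self_mul_riemannZeta_div_two]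
  refine ⟨?_, ?_⟩
  · simpa only [norm_div] using
      (summable_norm_logRatioCoeff_mul_riemannZeta hss).div_const ‖(2 : ℂ)‖
  · rw [sq, show 1 + 2 * s = 1 + s + s by ring,
      Gamma_one_add_mul_Gamma_one_add_div_Gamma_eq_exp_tsum hss, tsum_div_const,
      mul_div_cancel₀ _ two_ne_zero]
end
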